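/- Assume that M normalizes Ū. Let A and B be decomposable subgroups of G such that A normalizes B (i.e., a B a⁻¹ = B for all a ∈ A). Then the setwise product AB is a subgroup of G and AB is decomposable: AB = (AB ∩ Ū)(AB ∩ M)(AB ∩ U). -/
import Mathlib


open Pointwise

/-- A subgroup `J` of `G` is decomposable with respect to `(Ū, M, U)` if
`J = (J ∩ Ū)(J ∩ M)(J ∩ U)` as a setwise product. -/
def Decomposable {G : Type*} [Group G] (Ubar M U : Subgroup G) (J : Subgroup G) : Prop :=
  (J : Set G) =
    ((J : Set G) ∩ (Ubar : Set G)) * ((J : Set G) ∩ (M : Set G)) * ((J : Set G) ∩ (U : Set G))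

/-- Assume `M` normalizes `Ū`.  If `A` and `B` are decomposable subgroups of
`G` with `A` normalizing `B` (`a B a⁻¹ = B` for all `a ∈ A`), then the setwise product `A B`
is a subgroup of `G` and it is decomposable:
`A B = (A B ∩ Ū)(A B ∩ M)(A B ∩ U)`. -/
theorem mul_decomposable {G : Type*} [Group G] (Ubar M U : Subgroup G)
    (hMUbar : ∀ m ∈ M, ∀ u ∈ Ubar, m * u * m⁻¹ ∈ Ubar)
    (A B : Subgroup G)
    (hA : Decomposable Ubar M U A) (hB : Decomposable Ubar M U B)
    (hnorm : ∀ a ∈ A, (fun x => a * x * a⁻¹) '' (B : Set G) = (B : Set G)) :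
    (∃ C : Subgroup G, (C : Set G) = (A : Set G) * (B : Set G)) ∧
      (A : Set G) * (B : Set G) =
        (((A : Set G) * (B : Set G)) ∩ (Ubar : Set G)) *
          (((A : Set G) * (B : Set G)) ∩ (M : Set G)) *
          (((A : Set G) * (B : Set G)) ∩ (U : Set G)) := by
  have hBconj : ∀ a ∈ A, ∀ b ∈ B, a * b * a⁻¹ ∈ B := by
    intro a ha b hb
    show a * b * a⁻¹ ∈ (B : Set G)
    rw [← hnorm a ha]
    exact ⟨b, hb, rfl⟩
  -- closure of the set A*B under multiplication and inverse
  have hmul : ∀ x ∈ (A : Set G) * (B : Set G), ∀ y ∈ (A : Set G) * (B : Set G),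
      x * y ∈ (A : Set G) * (B : Set G) := by
    rintro x ⟨a1, ha1, b1, hb1, rfl⟩ y ⟨a2, ha2, b2, hb2, rfl⟩
    refine ⟨a1 * a2, mul_mem ha1 ha2, (a2⁻¹ * b1 * a2⁻¹⁻¹) * b2,
      mul_mem (hBconj a2⁻¹ (inv_mem ha2) b1 hb1) hb2, by group⟩
  have hinv : ∀ x ∈ (A : Set G) * (B : Set G), x⁻¹ ∈ (A : Set G) * (B : Set G) := by
    rintro x ⟨a, ha, b, hb, rfl⟩
    exact ⟨a⁻¹, inv_mem ha, a * b⁻¹ * a⁻¹, hBconj a ha b⁻¹ (inv_mem hb), by group⟩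
  have hAin : ∀ x ∈ A, x ∈ (A : Set G) * (B : Set G) :=
    fun x hx => ⟨x, hx, 1, one_mem B, mul_one x⟩
  have hBin : ∀ x ∈ B, x ∈ (A : Set G) * (B : Set G) :=
    fun x hx => ⟨1, one_mem A, x, hx, one_mul x⟩
  constructor
  · exact ⟨{ carrier := (A : Set G) * (B : Set G)
             one_mem' := ⟨1, one_mem A, 1, one_mem B, mul_one 1⟩
             mul_mem' := fun hx hy => hmul _ hx _ hy
             inv_mem' := fun hx => hinv _ hx }, rfl⟩
  · have hA' : (A : Set G) =
        ((A : Set G) ∩ (Ubar : Set G)) * ((A : Set G) ∩ (M : Set G)) *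
          ((A : Set G) ∩ (U : Set G)) := hA
    have hB' : (B : Set G) =
        ((B : Set G) ∩ (Ubar : Set G)) * ((B : Set G) ∩ (M : Set G)) *
          ((B : Set G) ∩ (U : Set G)) := hB
    apply Set.Subset.antisymm
    · rintro x ⟨a, ha, b, hb, rfl⟩
      have ha0 : a ∈ (A : Set G) := ha
      rw [hA'] at ha0
      obtain ⟨y, ⟨w1, ⟨hw1A, hw1U⟩, m1, ⟨hm1A, hm1M⟩, rfl⟩, v1, ⟨hv1A, hv1U⟩, rfl⟩ := ha0
      have hb' : v1 * b * v1⁻¹ ∈ (B : Set G) := hBconj v1 hv1A b hb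
      rw [hB'] at hb'
      obtain ⟨z, ⟨w2, ⟨hw2B, hw2U⟩, m2, ⟨hm2B, hm2M⟩, rfl⟩, v2, ⟨hv2B, hv2U⟩, heq⟩ := hb'
      have heq' : w2 * m2 * v2 = v1 * b * v1⁻¹ := heq
      have hbval : b = v1⁻¹ * (w2 * m2 * v2) * v1 := by rw [heq']; group
      subst hbval
      refine ⟨w1 * (m1 * w2 * m1⁻¹) * (m1 * m2),
        ⟨w1 * (m1 * w2 * m1⁻¹),
          ⟨hmul _ (hAin _ hw1A) _ (hBin _ (hBconj m1 hm1A w2 hw2B)),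
           mul_mem hw1U (hMUbar m1 hm1M w2 hw2U)⟩,
         m1 * m2, ⟨hmul _ (hAin _ hm1A) _ (hBin _ hm2B), mul_mem hm1M hm2M⟩, rfl⟩,
        v2 * v1, ⟨hmul _ (hBin _ hv2B) _ (hAin _ hv1A), mul_mem hv2U hv1U⟩, by group⟩
    · rintro x ⟨y, ⟨p, ⟨hp, _⟩, q, ⟨hq, _⟩, rfl⟩, r, ⟨hr, _⟩, rfl⟩
      exact hmul _ (hmul _ hp _ hq) _ hr
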